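/- arXiv:2007.07473 — 3 statements merged into one kernel-verified Lean document; each statement's English description precedes it below -/
import Mathlib

section
/- For Re(s) < 1, a > -1, and nonnegative integers j, k, the Laplace–Fourier transform I_{jk}^{(L)}(s) := ∫_0^∞ L_j^{(a)}(x) L_k^{(a)}(x) x^a e^{(s-1)x} dx equals Γ(a+1) ((a+1)_j / j!) ((a+1)_k / k!) (1-s)^{-(a+1)} (-s/(1-s))^{j+k} ₂F₁(-k, -j, a+1; 1/s²). -/
open Real MeasureTheory Finset

/-- Generalized Laguerre polynomial via the Rodrigues formula. -/
noncomputable def lagL (a : ℝ) (n : ℕ) (x : ℝ) : ℝ :=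
  x ^ (-a) * Real.exp x / (n.factorial : ℝ) *
    iteratedDeriv n (fun t : ℝ => Real.exp (-t) * t ^ ((n : ℝ) + a)) x

/-- Rising factorial (Pochhammer symbol) `(c)_n` for a real `c`. -/
noncomputable def poch (c : ℝ) (n : ℕ) : ℝ := ∏ i ∈ Finset.range n, (c + i)

/-- Terminating Gauss hypergeometric polynomial `₂F₁(-n, b, c; z)`. -/
noncomputable def hypF (n : ℕ) (b c z : ℝ) : ℝ :=
  ∑ m ∈ Finset.range (n + 1),
    poch (-(n : ℝ)) m * poch b m / (poch c m * (m.factorial : ℝ)) * z ^ m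

/-- Falling factorial. -/
noncomputable def ffR (c : ℝ) (n : ℕ) : ℝ := ∏ i ∈ Finset.range n, (c - i)

@[simp] lemma poch_zero (c : ℝ) : poch c 0 = 1 := by simp [poch]

lemma poch_succ (c : ℝ) (n : ℕ) : poch c (n + 1) = poch c n * (c + n) := by
  simp [poch, Finset.prod_range_succ]

@[simp] lemma ffR_zero (c : ℝ) : ffR c 0 = 1 := by simp [ffR]

lemma ffR_succ (c : ℝ) (n : ℕ) : ffR c (n + 1) = ffR c n * (c - n) := by
  simp [ffR, Finset.prod_range_succ]

lemma poch_pos {c : ℝ} (hc : 0 < c) (n : ℕ) : 0 < poch c n := by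
  refine Finset.prod_pos fun i _ => by positivity

lemma poch_add (c : ℝ) (m n : ℕ) : poch c (m + n) = poch c m * poch (c + m) n := by
  rw [poch, poch, poch, Finset.prod_range_add]
  congr 1
  refine Finset.prod_congr rfl fun i _ => by push_cast; ring

lemma poch_neg_nat_eq_zero {n m : ℕ} (h : n < m) : poch (-(n : ℝ)) m = 0 := by
  refine Finset.prod_eq_zero (Finset.mem_range.2 h) (by simp)

lemma ffR_eq_poch (c : ℝ) (n : ℕ) : ffR c n = poch (c - n + 1) n := by
  rw [ffR, poch, ← Finset.prod_range_reflect]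
  refine Finset.prod_congr rfl fun i hi => ?_
  rw [Finset.mem_range] at hi
  have : ((n - 1 - i : ℕ) : ℝ) = (n : ℝ) - 1 - i := by
    have h1 : i ≤ n - 1 := by omega
    have h2 : (1:ℕ) ≤ n := by omega
    push_cast [Nat.cast_sub h1, Nat.cast_sub h2]
    ring
  rw [this]; ring

lemma poch_neg_nat (n : ℕ) (m : ℕ) : poch (-(n : ℝ)) m = (-1) ^ m * ffR (n : ℝ) m := by
  induction m with
  | zero => simp
  | succ p ih => rw [poch_succ, ih, ffR_succ]; ring

lemma ffR_nat_eq (n m : ℕ) (h : m ≤ n) :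
    ffR (n : ℝ) m = (n.factorial : ℝ) / ((n - m).factorial : ℝ) := by
  induction m with
  | zero =>
    rw [ffR_zero, Nat.sub_zero, div_self (Nat.cast_ne_zero.2 (Nat.factorial_ne_zero n))]
  | succ p ih =>
    have hp : p ≤ n := by omega
    rw [ffR_succ, ih hp]
    have h1 : ((n - p : ℕ) : ℝ) = (n : ℝ) - p := by push_cast [Nat.cast_sub hp]; ring
    have h2 : (n - p) = (n - (p+1)) + 1 := by omega
    have h3 : ((n - p).factorial : ℝ) = ((n - (p+1)).factorial : ℝ) * ((n - p : ℕ) : ℝ) := by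
      rw [h2, Nat.factorial_succ, ← h2]; push_cast; ring
    have h4 : ((n - (p+1)).factorial : ℝ) ≠ 0 := Nat.cast_ne_zero.2 (Nat.factorial_ne_zero _)
    have h5 : ((n - p).factorial : ℝ) ≠ 0 := Nat.cast_ne_zero.2 (Nat.factorial_ne_zero _)
    have h7 : (n : ℝ) - (p : ℝ) ≠ 0 := by
      rw [← h1]
      have : 0 < n - p := by omega
      have := Nat.cast_pos (α := ℝ) |>.2 this
      exact ne_of_gt this
    rw [h3, h1]
    field_simp

lemma poch_neg_nat_eq (n m : ℕ) (h : m ≤ n) :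
    poch (-(n : ℝ)) m = (-1) ^ m * (n.factorial : ℝ) / ((n - m).factorial : ℝ) := by
  rw [poch_neg_nat, ffR_nat_eq n m h, mul_div_assoc]

lemma ffR_nat_div_factorial (n m : ℕ) (h : m ≤ n) :
    ffR (n : ℝ) m / (m.factorial : ℝ) = (n.choose m : ℝ) := by
  rw [ffR_nat_eq n m h, Nat.cast_choose ℝ h]
  rw [div_div]
  ring_nf

/-- Binomial lemma: `∑ poch(-N, t)/t! x^t = (1-x)^N`. -/
lemma sum_poch_neg_binom (N : ℕ) (x : ℝ) :
    ∑ t ∈ Finset.range (N + 1), poch (-(N : ℝ)) t / (t.factorial : ℝ) * x ^ t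
      = (1 - x) ^ N := by
  have : (1 - x) ^ N = ((-x) + 1) ^ N := by ring_nf
  rw [this, add_pow]
  refine Finset.sum_congr rfl fun t ht => ?_
  rw [Finset.mem_range] at ht
  have h : t ≤ N := by omega
  rw [poch_neg_nat_eq N t h]
  rw [← ffR_nat_div_factorial N t h, ffR_nat_eq N t h]
  rw [one_pow, neg_pow]
  field_simp
  ring

/-- Vandermonde's identity for real falling factorials. -/
lemma ffR_vandermonde (x y : ℝ) : ∀ l : ℕ,
    ∑ m ∈ Finset.range (l + 1), (l.choose m : ℝ) * ffR x m * ffR y (l - m)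
      = ffR (x + y) l := by
  intro l
  induction l with
  | zero => simp
  | succ l ih =>
    have key : ∑ m ∈ Finset.range (l + 1 + 1),
        ((l+1).choose m : ℝ) * ffR x m * ffR y (l + 1 - m)
        = (∑ m ∈ Finset.range (l + 1), (l.choose m : ℝ) * ffR x (m+1) * ffR y (l - m))
          + ∑ m ∈ Finset.range (l + 1), (l.choose m : ℝ) * ffR x m * ffR y (l + 1 - m) := by
      rw [Finset.sum_range_succ' (fun m => ((l+1).choose m : ℝ) * ffR x m * ffR y (l + 1 - m)) (l+1)]
      have step1 : ∀ m ∈ Finset.range (l + 1),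
          ((l+1).choose (m+1) : ℝ) * ffR x (m+1) * ffR y (l + 1 - (m+1))
          = (l.choose m : ℝ) * ffR x (m+1) * ffR y (l - m)
            + (l.choose (m+1) : ℝ) * ffR x (m+1) * ffR y (l - m) := by
        intro m hm
        rw [Nat.choose_succ_succ l m, show l + 1 - (m + 1) = l - m from by omega]
        push_cast; ring
      rw [Finset.sum_congr rfl step1, Finset.sum_add_distrib]
      have hT2 : (∑ m ∈ Finset.range (l + 1), (l.choose (m+1) : ℝ) * ffR x (m+1) * ffR y (l - m))
          = ∑ m ∈ Finset.range l, (l.choose (m+1) : ℝ) * ffR x (m+1) * ffR y (l - m) := by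
        rw [Finset.sum_range_succ]
        simp
      have hS : (∑ m ∈ Finset.range (l + 1), (l.choose m : ℝ) * ffR x m * ffR y (l + 1 - m))
          = (∑ m ∈ Finset.range l, (l.choose (m+1) : ℝ) * ffR x (m+1) * ffR y (l - m))
            + ffR y (l + 1) := by
        rw [Finset.sum_range_succ' (fun m => (l.choose m : ℝ) * ffR x m * ffR y (l + 1 - m)) l]
        simp only [Nat.choose_zero_right, Nat.cast_one, one_mul, ffR_zero, Nat.sub_zero]
        congr 1
        refine Finset.sum_congr rfl fun m hm => ?_
        rw [show l + 1 - (m + 1) = l - m from by omega]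
      rw [hT2, hS]
      simp only [Nat.choose_zero_right, Nat.cast_one, one_mul, ffR_zero, Nat.sub_zero]
      ring
    rw [key]
    rw [← Finset.sum_add_distrib]
    have step2 : ∀ m ∈ Finset.range (l + 1),
        (l.choose m : ℝ) * ffR x (m+1) * ffR y (l - m)
          + (l.choose m : ℝ) * ffR x m * ffR y (l + 1 - m)
        = ((l.choose m : ℝ) * ffR x m * ffR y (l - m)) * (x + y - l) := by
      intro m hm
      rw [Finset.mem_range] at hm
      have hm' : m ≤ l := by omega
      rw [ffR_succ, show l + 1 - m = (l - m) + 1 from by omega, ffR_succ]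
      have : ((l - m : ℕ) : ℝ) = (l : ℝ) - m := by push_cast [Nat.cast_sub hm']; ring
      rw [this]
      ring
    rw [Finset.sum_congr rfl step2, ← Finset.sum_mul, ih, ffR_succ]

/-- Chu–Vandermonde for terminating ₂F₁ at 1. -/
lemma chu_vandermonde {β : ℝ} (hβ : 0 < β) (i l : ℕ) :
    ∑ m ∈ Finset.range (l + 1),
        poch (-(l : ℝ)) m * poch (-(i : ℝ)) m / (poch β m * (m.factorial : ℝ))
      = poch (β + i) l / poch β l := by
  have hterm : ∀ m ∈ Finset.range (l + 1),
      poch (-(l : ℝ)) m * poch (-(i : ℝ)) m / (poch β m * (m.factorial : ℝ))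
        = ((l.choose m : ℝ) * ffR (i : ℝ) m * ffR (β + l - 1) (l - m)) / poch β l := by
    intro m hm
    rw [Finset.mem_range] at hm
    have hm' : m ≤ l := by omega
    have hsplit : poch β l = poch β m * poch (β + m) (l - m) := by
      rw [← poch_add, Nat.add_sub_cancel' hm']
    have hffp : ffR (β + l - 1) (l - m) = poch (β + m) (l - m) := by
      rw [ffR_eq_poch]
      congr 1
      have : ((l - m : ℕ) : ℝ) = (l : ℝ) - m := by push_cast [Nat.cast_sub hm']; ring
      rw [this]; ring
    have hch : (l.choose m : ℝ) = ffR (l : ℝ) m / (m.factorial : ℝ) :=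
      (ffR_nat_div_factorial l m hm').symm
    have h1 : poch β m ≠ 0 := ne_of_gt (poch_pos hβ m)
    have h2 : (m.factorial : ℝ) ≠ 0 := Nat.cast_ne_zero.2 (Nat.factorial_ne_zero m)
    have h3 : poch (β + m) (l - m) ≠ 0 := by
      have : (0:ℝ) < β + m := by positivity
      exact ne_of_gt (poch_pos this _)
    rw [poch_neg_nat, poch_neg_nat, hffp, hch, hsplit]
    field_simp
    have : ((-1:ℝ)) ^ m * ffR (↑l) m * ((-1:ℝ) ^ m * ffR (↑i) m)
        = ((-1:ℝ)^m)^2 * (ffR (↑l) m * ffR (↑i) m) := by ring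
    rw [← pow_mul, mul_comm m 2, pow_mul, neg_one_sq, one_pow]
    ring
  rw [Finset.sum_congr rfl hterm, ← Finset.sum_div]
  congr 1
  rw [ffR_vandermonde (i : ℝ) (β + l - 1) l, ffR_eq_poch]
  congr 1
  ring

/-- Key reindexing lemma. -/
lemma sum_poch_shift (k m : ℕ) (x : ℝ) :
    ∑ l ∈ Finset.range (k + 1),
        poch (-(k : ℝ)) l * poch (-(l : ℝ)) m * x ^ l / (l.factorial : ℝ)
      = poch (-(k : ℝ)) m * (-1) ^ m * x ^ m * (1 - x) ^ (k - m) := by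
  by_cases hmk : m ≤ k
  · have hk1 : k + 1 = m + (k - m + 1) := by omega
    rw [hk1, Finset.sum_range_add]
    have hz : ∀ l ∈ Finset.range m,
        poch (-(l : ℝ)) m = 0 := fun l hl =>
      poch_neg_nat_eq_zero (Finset.mem_range.1 hl)
    have h0 : (∑ l ∈ Finset.range m,
        poch (-(k : ℝ)) l * poch (-(l : ℝ)) m * x ^ l / (l.factorial : ℝ)) = 0 := by
      refine Finset.sum_eq_zero fun l hl => by rw [hz l hl]; ring
    rw [h0, zero_add]
    have hterm : ∀ t ∈ Finset.range (k - m + 1),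
        poch (-(k : ℝ)) (m + t) * poch (-((m + t : ℕ) : ℝ)) m * x ^ (m + t) / ((m + t).factorial : ℝ)
        = (poch (-(k : ℝ)) m * (-1) ^ m * x ^ m) *
            (poch (-((k - m : ℕ) : ℝ)) t / (t.factorial : ℝ) * x ^ t) := by
      intro t ht
      have e1 : poch (-(k : ℝ)) (m + t) = poch (-(k : ℝ)) m * poch (-(k : ℝ) + m) t :=
        poch_add _ m t
      have e2 : -(k : ℝ) + m = -((k - m : ℕ) : ℝ) := by
        push_cast [Nat.cast_sub hmk]; ring
      have e3 : poch (-((m + t : ℕ) : ℝ)) m = (-1) ^ m * (((m + t).factorial : ℝ) / (t.factorial : ℝ)) := by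
        rw [poch_neg_nat, ffR_nat_eq (m + t) m (by omega), Nat.add_sub_cancel_left]
      have h4 : ((m + t).factorial : ℝ) ≠ 0 := Nat.cast_ne_zero.2 (Nat.factorial_ne_zero _)
      have h5 : ((t).factorial : ℝ) ≠ 0 := Nat.cast_ne_zero.2 (Nat.factorial_ne_zero _)
      rw [e1, e2, e3, pow_add]
      field_simp
    rw [Finset.sum_congr rfl hterm, ← Finset.mul_sum, sum_poch_neg_binom (k - m) x]
  · push_neg at hmk
    have h0 : (∑ l ∈ Finset.range (k + 1),
        poch (-(k : ℝ)) l * poch (-(l : ℝ)) m * x ^ l / (l.factorial : ℝ)) = 0 := by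
      refine Finset.sum_eq_zero fun l hl => ?_
      rw [Finset.mem_range] at hl
      rw [poch_neg_nat_eq_zero (show l < m by omega)]
      ring
    rw [h0, poch_neg_nat_eq_zero hmk]
    ring

/-- The central finite double-sum identity. -/
lemma main_identity {β : ℝ} (hβ : 0 < β) (j k : ℕ) (x : ℝ) :
    ∑ i ∈ Finset.range (j + 1), ∑ l ∈ Finset.range (k + 1),
        poch (-(j : ℝ)) i * poch (-(k : ℝ)) l * poch β (i + l) /
          (poch β i * poch β l * (i.factorial : ℝ) * (l.factorial : ℝ)) * x ^ (i + l)
      = ∑ m ∈ Finset.range (k + 1),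
          poch (-(k : ℝ)) m * poch (-(j : ℝ)) m / (poch β m * (m.factorial : ℝ)) *
            (x ^ 2) ^ m * (1 - x) ^ (j + k - 2 * m) := by
  have hstep1 : ∀ i ∈ Finset.range (j + 1),
      (∑ l ∈ Finset.range (k + 1),
        poch (-(j : ℝ)) i * poch (-(k : ℝ)) l * poch β (i + l) /
          (poch β i * poch β l * (i.factorial : ℝ) * (l.factorial : ℝ)) * x ^ (i + l))
      = ∑ m ∈ Finset.range (k + 1),
          (1 / (poch β m * (m.factorial : ℝ)))
            * (poch (-(j : ℝ)) i * poch (-(i : ℝ)) m * x ^ i / (i.factorial : ℝ))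
            * (poch (-(k : ℝ)) m * (-1) ^ m * x ^ m * (1 - x) ^ (k - m)) := by
    intro i hi
    have hinner : ∀ l ∈ Finset.range (k + 1),
        poch (-(j : ℝ)) i * poch (-(k : ℝ)) l * poch β (i + l) /
          (poch β i * poch β l * (i.factorial : ℝ) * (l.factorial : ℝ)) * x ^ (i + l)
        = ∑ m ∈ Finset.range (k + 1),
            (1 / (poch β m * (m.factorial : ℝ)))
              * (poch (-(j : ℝ)) i * poch (-(i : ℝ)) m * x ^ i / (i.factorial : ℝ))
              * (poch (-(k : ℝ)) l * poch (-(l : ℝ)) m * x ^ l / (l.factorial : ℝ)) := by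
      intro l hl
      rw [Finset.mem_range] at hl
      have hlk : l ≤ k := by omega
      have hchu : poch (β + (i : ℝ)) l / poch β l
          = ∑ m ∈ Finset.range (k + 1),
              poch (-(l : ℝ)) m * poch (-(i : ℝ)) m / (poch β m * (m.factorial : ℝ)) := by
        rw [← chu_vandermonde hβ i l]
        refine Finset.sum_subset (fun m hm => Finset.mem_range.2
          (lt_of_lt_of_le (Finset.mem_range.1 hm) (by omega))) ?_
        intro m hm1 hm2
        rw [Finset.mem_range] at hm1 hm2
        rw [poch_neg_nat_eq_zero (show l < m by omega)]
        ring
      have hpadd : poch β (i + l) = poch β i * poch (β + (i : ℝ)) l := poch_add β i l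
      have h1 : poch β i ≠ 0 := ne_of_gt (poch_pos hβ i)
      have h2 : poch β l ≠ 0 := ne_of_gt (poch_pos hβ l)
      have h3 : (i.factorial : ℝ) ≠ 0 := Nat.cast_ne_zero.2 (Nat.factorial_ne_zero _)
      have h4 : (l.factorial : ℝ) ≠ 0 := Nat.cast_ne_zero.2 (Nat.factorial_ne_zero _)
      have key : poch (-(j : ℝ)) i * poch (-(k : ℝ)) l * poch β (i + l) /
          (poch β i * poch β l * (i.factorial : ℝ) * (l.factorial : ℝ)) * x ^ (i + l)
          = (poch (-(j : ℝ)) i * poch (-(k : ℝ)) l * x ^ i * x ^ l / ((i.factorial : ℝ) * (l.factorial : ℝ)))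
            * (poch (β + (i : ℝ)) l / poch β l) := by
        rw [hpadd, pow_add]
        field_simp
      rw [key, hchu, Finset.mul_sum]
      refine Finset.sum_congr rfl fun m hm => ?_
      ring
    rw [Finset.sum_congr rfl hinner, Finset.sum_comm]
    refine Finset.sum_congr rfl fun m hm => ?_
    rw [← Finset.mul_sum, sum_poch_shift k m x]
  rw [Finset.sum_congr rfl hstep1, Finset.sum_comm]
  refine Finset.sum_congr rfl fun m hm => ?_
  rw [Finset.mem_range] at hm
  have hfact : ∀ i ∈ Finset.range (j + 1),
      (1 / (poch β m * (m.factorial : ℝ)))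
        * (poch (-(j : ℝ)) i * poch (-(i : ℝ)) m * x ^ i / (i.factorial : ℝ))
        * (poch (-(k : ℝ)) m * (-1) ^ m * x ^ m * (1 - x) ^ (k - m))
      = ((1 / (poch β m * (m.factorial : ℝ))) * (poch (-(k : ℝ)) m * (-1) ^ m * x ^ m * (1 - x) ^ (k - m)))
        * (poch (-(j : ℝ)) i * poch (-(i : ℝ)) m * x ^ i / (i.factorial : ℝ)) := by
    intro i hi; ring
  rw [Finset.sum_congr rfl hfact, ← Finset.mul_sum, sum_poch_shift j m x]
  by_cases hmj : m ≤ j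
  · have hexp : (k - m) + (j - m) = j + k - 2 * m := by omega
    have hpm : poch β m ≠ 0 := ne_of_gt (poch_pos hβ m)
    have hfm : (m.factorial : ℝ) ≠ 0 := Nat.cast_ne_zero.2 (Nat.factorial_ne_zero _)
    rw [← hexp, pow_add]
    have hsq : ((-1 : ℝ)) ^ m * ((-1 : ℝ)) ^ m = 1 := by
      rw [← pow_add, ← two_mul, pow_mul, neg_one_sq, one_pow]
    linear_combination (poch (-(k : ℝ)) m * poch (-(j : ℝ)) m * x ^ m * x ^ m *
      (1 - x) ^ (k - m) * (1 - x) ^ (j - m) / (poch β m * (m.factorial : ℝ))) * hsq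
  · push_neg at hmj
    rw [poch_neg_nat_eq_zero hmj]
    ring

/-- Algebraic recombination step for the Rodrigues derivative. -/
lemma deriv_sum_step (c x : ℝ) (p : ℕ) :
    ∑ i ∈ Finset.range (p + 2),
        (-1 : ℝ) ^ (p + 1 - i) * ((p+1).choose i : ℝ) * ffR c i * x ^ (c - i)
      = -(∑ i ∈ Finset.range (p + 1),
            (-1 : ℝ) ^ (p - i) * (p.choose i : ℝ) * ffR c i * x ^ (c - i))
        + ∑ i ∈ Finset.range (p + 1),
            (-1 : ℝ) ^ (p - i) * (p.choose i : ℝ) * ffR c i * ((c - i) * x ^ (c - i - 1)) := by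
  rw [Finset.sum_range_succ'
    (fun i => (-1 : ℝ) ^ (p + 1 - i) * ((p+1).choose i : ℝ) * ffR c i * x ^ (c - i)) (p+1)]
  have hsplit : ∀ i ∈ Finset.range (p + 1),
      (-1 : ℝ) ^ (p + 1 - (i+1)) * ((p+1).choose (i+1) : ℝ) * ffR c (i+1) * x ^ (c - (i+1 : ℕ))
      = ((-1 : ℝ) ^ (p - i) * (p.choose i : ℝ) * ffR c (i+1) * x ^ (c - (i+1 : ℕ)))
        + ((-1 : ℝ) ^ (p - i) * (p.choose (i+1) : ℝ) * ffR c (i+1) * x ^ (c - (i+1 : ℕ))) := by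
    intro i hi
    rw [show p + 1 - (i + 1) = p - i from by omega, Nat.choose_succ_succ]
    push_cast
    ring
  rw [Finset.sum_congr rfl hsplit, Finset.sum_add_distrib]
  have hA : (∑ i ∈ Finset.range (p + 1),
      (-1 : ℝ) ^ (p - i) * (p.choose i : ℝ) * ffR c (i+1) * x ^ (c - (i+1 : ℕ)))
      = ∑ i ∈ Finset.range (p + 1),
          (-1 : ℝ) ^ (p - i) * (p.choose i : ℝ) * ffR c i * ((c - i) * x ^ (c - i - 1)) := by
    refine Finset.sum_congr rfl fun i hi => ?_
    rw [show c - ((i+1 : ℕ) : ℝ) = c - i - 1 from by push_cast; ring, ffR_succ]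
    ring
  have hB : (∑ i ∈ Finset.range (p + 1),
      (-1 : ℝ) ^ (p - i) * (p.choose (i+1) : ℝ) * ffR c (i+1) * x ^ (c - (i+1 : ℕ)))
      + (-1 : ℝ) ^ (p + 1 - 0) * ((p+1).choose 0 : ℝ) * ffR c 0 * x ^ (c - (0 : ℕ))
      = -(∑ i ∈ Finset.range (p + 1),
            (-1 : ℝ) ^ (p - i) * (p.choose i : ℝ) * ffR c i * x ^ (c - i)) := by
    rw [← Finset.sum_neg_distrib]
    rw [Finset.sum_range_succ'
      (fun i => -((-1 : ℝ) ^ (p - i) * (p.choose i : ℝ) * ffR c i * x ^ (c - (i : ℕ)))) p]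
    congr 1
    · rw [Finset.sum_range_succ]
      simp only [Nat.choose_succ_self, Nat.cast_zero, mul_zero, zero_mul, mul_zero, add_zero]
      refine Finset.sum_congr rfl fun i hi => ?_
      rw [Finset.mem_range] at hi
      rw [show p - i = (p - (i+1)) + 1 from by omega]
      ring
    · simp only [Nat.choose_zero_right, Nat.cast_one, ffR_zero, Nat.sub_zero, Nat.cast_zero]
      rw [pow_succ]
      ring
  rw [hA, add_assoc, hB]
  ring

/-- Iterated derivatives of the Rodrigues kernel on the positive axis. -/
lemma iteratedDeriv_rodrigues (c : ℝ) :
    ∀ (p : ℕ) {x : ℝ}, 0 < x →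
      iteratedDeriv p (fun t : ℝ => Real.exp (-t) * t ^ c) x
        = Real.exp (-x) * ∑ i ∈ Finset.range (p + 1),
            (-1 : ℝ) ^ (p - i) * (p.choose i : ℝ) * ffR c i * x ^ (c - i) := by
  intro p
  induction p with
  | zero =>
    intro x hx
    simp [iteratedDeriv_zero]
  | succ p ih =>
    intro x hx
    rw [iteratedDeriv_succ]
    have hEq : deriv (iteratedDeriv p (fun t : ℝ => Real.exp (-t) * t ^ c)) x
        = deriv (fun y : ℝ => Real.exp (-y) * ∑ i ∈ Finset.range (p + 1),
            (-1 : ℝ) ^ (p - i) * (p.choose i : ℝ) * ffR c i * y ^ (c - i)) x := by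
      refine Filter.EventuallyEq.deriv_eq ?_
      refine Filter.eventuallyEq_of_mem (isOpen_Ioi.mem_nhds hx) fun y hy => ?_
      exact ih hy
    rw [hEq]
    have hexp : HasDerivAt (fun y : ℝ => Real.exp (-y)) (-Real.exp (-x)) x := by
      exact ((Real.hasDerivAt_exp (-x)).comp x (hasDerivAt_neg x)).congr_deriv (by ring)
    have hsum : HasDerivAt (fun y : ℝ => ∑ i ∈ Finset.range (p + 1),
        (-1 : ℝ) ^ (p - i) * (p.choose i : ℝ) * ffR c i * y ^ (c - i))
        (∑ i ∈ Finset.range (p + 1),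
          (-1 : ℝ) ^ (p - i) * (p.choose i : ℝ) * ffR c i * ((c - i) * x ^ (c - i - 1))) x := by
      refine HasDerivAt.fun_sum fun i _ => ?_
      exact (Real.hasDerivAt_rpow_const (Or.inl (ne_of_gt hx))).const_mul _
    have hg := hexp.fun_mul hsum
    rw [hg.deriv]
    rw [deriv_sum_step c x p]
    ring

/-- Closed form of the generalized Laguerre polynomial on the positive axis. -/
lemma lagL_eq (a : ℝ) (ha : -1 < a) (n : ℕ) {x : ℝ} (hx : 0 < x) :
    lagL a n x = ∑ q ∈ Finset.range (n + 1),
      (poch (a+1) n / (n.factorial : ℝ)) *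
        (poch (-(n : ℝ)) q / (poch (a+1) q * (q.factorial : ℝ))) * x ^ q := by
  unfold lagL
  rw [iteratedDeriv_rodrigues ((n : ℝ) + a) n hx]
  rw [Finset.mul_sum, Finset.mul_sum]
  rw [← Finset.sum_range_reflect]
  simp only [Nat.add_sub_cancel]
  refine Finset.sum_congr rfl fun q hq => ?_
  rw [Finset.mem_range] at hq
  have hqn : q ≤ n := by omega
  have h1 : n - (n - q) = q := by omega
  have hxa : x ^ (-a) * Real.exp x / (n.factorial : ℝ) *
      (Real.exp (-x) * ((-1 : ℝ) ^ (n - (n - q)) * (n.choose (n - q) : ℝ) *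
        ffR ((n : ℝ) + a) (n - q) * x ^ ((n : ℝ) + a - ((n - q : ℕ) : ℝ))))
      = ((-1 : ℝ) ^ q * (n.choose (n - q) : ℝ) * ffR ((n : ℝ) + a) (n - q) / (n.factorial : ℝ))
        * (x ^ (-a) * x ^ ((n : ℝ) + a - ((n - q : ℕ) : ℝ))) * (Real.exp x * Real.exp (-x)) := by
    rw [h1]; ring
  rw [hxa, ← Real.exp_add, add_neg_cancel, Real.exp_zero, mul_one]
  have hpow : x ^ (-a) * x ^ ((n : ℝ) + a - ((n - q : ℕ) : ℝ)) = x ^ q := by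
    rw [← Real.rpow_add hx]
    have : -a + ((n : ℝ) + a - ((n - q : ℕ) : ℝ)) = ((q : ℕ) : ℝ) := by
      push_cast [Nat.cast_sub hqn]; ring
    rw [this, Real.rpow_natCast]
  rw [hpow]
  have hff : ffR ((n : ℝ) + a) (n - q) = poch (a + q + 1) (n - q) := by
    rw [ffR_eq_poch]
    congr 1
    push_cast [Nat.cast_sub hqn]; ring
  have hpochn : poch (a+1) n = poch (a+1) q * poch (a + q + 1) (n - q) := by
    have h := poch_add (a+1) q (n - q)
    rw [show q + (n - q) = n from by omega,
      show a + 1 + (q : ℝ) = a + q + 1 from by ring] at h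
    exact h
  rw [Nat.choose_symm hqn, hff, hpochn, poch_neg_nat_eq n q hqn, Nat.cast_choose ℝ hqn]
  have h2 : (n.factorial : ℝ) ≠ 0 := Nat.cast_ne_zero.2 (Nat.factorial_ne_zero _)
  have h3 : (q.factorial : ℝ) ≠ 0 := Nat.cast_ne_zero.2 (Nat.factorial_ne_zero _)
  have h4 : ((n - q).factorial : ℝ) ≠ 0 := Nat.cast_ne_zero.2 (Nat.factorial_ne_zero _)
  have h5 : poch (a+1) q ≠ 0 := ne_of_gt (poch_pos (by linarith) q)
  field_simp

lemma Gamma_poch {β : ℝ} (hβ : 0 < β) (n : ℕ) :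
    Real.Gamma (β + n) = Real.Gamma β * poch β n := by
  induction n with
  | zero => simp
  | succ n ih =>
    have h : β + ((n + 1 : ℕ) : ℝ) = (β + n) + 1 := by push_cast; ring
    rw [h, Real.Gamma_add_one (by positivity), ih, poch_succ]
    ring

lemma integrableOn_rpow_exp {b σ : ℝ} (hb : -1 < b) (hσ : 0 < σ) :
    IntegrableOn (fun x : ℝ => x ^ b * Real.exp (-(σ * x))) (Set.Ioi 0) := by
  have h0 : (0:ℝ) < b + 1 := by linarith
  have h1 : IntegrableOn (fun x : ℝ => Real.exp (-x) * x ^ b) (Set.Ioi 0) := by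
    simpa using Real.GammaIntegral_convergent h0
  have h2 : IntegrableOn (fun x : ℝ => Real.exp (-(σ * x)) * (σ * x) ^ b) (Set.Ioi 0) := by
    have := (MeasureTheory.integrableOn_Ioi_comp_mul_left_iff
      (fun x : ℝ => Real.exp (-x) * x ^ b) 0 hσ).mpr
    rw [mul_zero] at this
    exact this h1
  have h3 : IntegrableOn (fun x : ℝ => (σ ^ (-b)) * (Real.exp (-(σ * x)) * (σ * x) ^ b))
      (Set.Ioi 0) := h2.const_mul _
  refine h3.congr_fun (fun x hx => ?_) measurableSet_Ioi
  rw [Set.mem_Ioi] at hx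
  beta_reduce
  rw [Real.mul_rpow (le_of_lt hσ) (le_of_lt hx), Real.rpow_neg (le_of_lt hσ)]
  have hσb : σ ^ b ≠ 0 := ne_of_gt (Real.rpow_pos_of_pos hσ b)
  field_simp

lemma integral_rpow_exp {b σ : ℝ} (hb : -1 < b) (hσ : 0 < σ) :
    ∫ x in Set.Ioi (0:ℝ), x ^ b * Real.exp (-(σ * x))
      = (1/σ) ^ (b + 1) * Real.Gamma (b + 1) := by
  have h0 : (0:ℝ) < b + 1 := by linarith
  have := Real.integral_rpow_mul_exp_neg_mul_Ioi h0 hσ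
  simpa using this

theorem laguerre_product_laplace_transform (a : ℝ) (ha : -1 < a) (s : ℝ)
    (hs : s < 1) (hs0 : s ≠ 0) (j k : ℕ) :
    ∫ x in Set.Ioi (0 : ℝ), lagL a j x * lagL a k x * x ^ a * Real.exp ((s - 1) * x) =
      Real.Gamma (a + 1) * (poch (a + 1) j / (j.factorial : ℝ)) *
        (poch (a + 1) k / (k.factorial : ℝ)) * (1 - s) ^ (-(a + 1)) *
        (-s / (1 - s)) ^ (j + k) * hypF k (-(j : ℝ)) (a + 1) (1 / s ^ 2) := by
  have hβ : (0:ℝ) < a + 1 := by linarith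
  have hσ : (0:ℝ) < 1 - s := by linarith
  have hσ0 : (1 - s) ≠ 0 := ne_of_gt hσ
  -- coefficient and integrand abbreviations
  set Cj : ℝ := poch (a + 1) j / (j.factorial : ℝ) with hCj
  set Ck : ℝ := poch (a + 1) k / (k.factorial : ℝ) with hCk
  -- Step 1: rewrite the integrand as a finite sum over the product index set
  have hcong : Set.EqOn
      (fun x : ℝ => lagL a j x * lagL a k x * x ^ a * Real.exp ((s - 1) * x))
      (fun x : ℝ => ∑ p ∈ Finset.range (j+1) ×ˢ Finset.range (k+1),
          (Cj * (poch (-(j:ℝ)) p.1 / (poch (a+1) p.1 * (p.1.factorial : ℝ))) *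
           (Ck * (poch (-(k:ℝ)) p.2 / (poch (a+1) p.2 * (p.2.factorial : ℝ))))) *
          (x ^ (a + p.1 + p.2) * Real.exp (-((1-s) * x))))
      (Set.Ioi 0) := by
    intro x hx
    rw [Set.mem_Ioi] at hx
    simp only
    rw [Finset.sum_product]
    rw [lagL_eq a ha j hx, lagL_eq a ha k hx, Finset.sum_mul_sum]
    rw [Finset.sum_mul, Finset.sum_mul]
    refine Finset.sum_congr rfl fun i hi => ?_
    rw [Finset.sum_mul, Finset.sum_mul]
    refine Finset.sum_congr rfl fun l hl => ?_
    have hxpow : (x:ℝ) ^ (i:ℕ) * x ^ (l:ℕ) * x ^ a = x ^ (a + i + l) := by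
      rw [← Real.rpow_natCast x i, ← Real.rpow_natCast x l, ← Real.rpow_add hx,
        ← Real.rpow_add hx]
      congr 1
      ring
    have hexp : Real.exp ((s - 1) * x) = Real.exp (-((1-s) * x)) := by
      congr 1; ring
    rw [hexp, ← hxpow]
    ring
  rw [MeasureTheory.setIntegral_congr_fun measurableSet_Ioi hcong]
  -- Step 2: interchange integral and sum
  have hint : ∀ p ∈ Finset.range (j+1) ×ˢ Finset.range (k+1),
      Integrable (fun x : ℝ =>
          (Cj * (poch (-(j:ℝ)) p.1 / (poch (a+1) p.1 * (p.1.factorial : ℝ))) *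
           (Ck * (poch (-(k:ℝ)) p.2 / (poch (a+1) p.2 * (p.2.factorial : ℝ))))) *
          (x ^ (a + p.1 + p.2) * Real.exp (-((1-s) * x))))
        (MeasureTheory.volume.restrict (Set.Ioi 0)) := by
    intro p hp
    have hb : (-1:ℝ) < a + p.1 + p.2 := by
      have h1 : (0:ℝ) ≤ (p.1 : ℝ) := Nat.cast_nonneg _
      have h2 : (0:ℝ) ≤ (p.2 : ℝ) := Nat.cast_nonneg _
      linarith
    exact (integrableOn_rpow_exp hb hσ).const_mul _
  rw [MeasureTheory.integral_finset_sum _ hint]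
  -- Step 3: evaluate each integral
  have heval : ∀ p ∈ Finset.range (j+1) ×ˢ Finset.range (k+1),
      (∫ x in Set.Ioi (0:ℝ),
          (Cj * (poch (-(j:ℝ)) p.1 / (poch (a+1) p.1 * (p.1.factorial : ℝ))) *
           (Ck * (poch (-(k:ℝ)) p.2 / (poch (a+1) p.2 * (p.2.factorial : ℝ))))) *
          (x ^ (a + p.1 + p.2) * Real.exp (-((1-s) * x))))
      = (Real.Gamma (a+1) * (1/(1-s)) ^ (a+1) * Cj * Ck) *
          (poch (-(j:ℝ)) p.1 * poch (-(k:ℝ)) p.2 * poch (a+1) (p.1 + p.2) /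
            (poch (a+1) p.1 * poch (a+1) p.2 * (p.1.factorial : ℝ) * (p.2.factorial : ℝ)) *
            (1/(1-s)) ^ (p.1 + p.2)) := by
    intro p hp
    have hb : (-1:ℝ) < a + p.1 + p.2 := by
      have h1 : (0:ℝ) ≤ (p.1 : ℝ) := Nat.cast_nonneg _
      have h2 : (0:ℝ) ≤ (p.2 : ℝ) := Nat.cast_nonneg _
      linarith
    rw [MeasureTheory.integral_const_mul, integral_rpow_exp hb hσ]
    have hGam : Real.Gamma (a + p.1 + p.2 + 1)
        = Real.Gamma (a+1) * poch (a+1) (p.1 + p.2) := by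
      rw [show a + (p.1:ℝ) + (p.2:ℝ) + 1 = (a+1) + ((p.1 + p.2 : ℕ) : ℝ) from by push_cast; ring]
      exact Gamma_poch hβ _
    have hrpow : ((1:ℝ)/(1-s)) ^ (a + p.1 + p.2 + 1)
        = (1/(1-s)) ^ (a+1) * ((1:ℝ)/(1-s)) ^ ((p.1 + p.2 : ℕ)) := by
      rw [show a + (p.1:ℝ) + (p.2:ℝ) + 1 = (a+1) + ((p.1 + p.2 : ℕ) : ℝ) from by push_cast; ring]
      rw [Real.rpow_add (by positivity), Real.rpow_natCast]
    rw [hGam, hrpow]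
    have hp1 : poch (a+1) p.1 ≠ 0 := ne_of_gt (poch_pos hβ _)
    have hp2 : poch (a+1) p.2 ≠ 0 := ne_of_gt (poch_pos hβ _)
    have hf1 : (p.1.factorial : ℝ) ≠ 0 := Nat.cast_ne_zero.2 (Nat.factorial_ne_zero _)
    have hf2 : (p.2.factorial : ℝ) ≠ 0 := Nat.cast_ne_zero.2 (Nat.factorial_ne_zero _)
    rw [hCj, hCk]
    field_simp
  rw [Finset.sum_congr rfl heval, ← Finset.mul_sum, Finset.sum_product]
  rw [main_identity hβ j k (1/(1-s))]
  -- Step 4: final algebraic conversion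
  have hrpow2 : ((1:ℝ)/(1-s)) ^ (a+1) = (1-s) ^ (-(a+1)) := by
    rw [one_div, Real.inv_rpow hσ.le, ← Real.rpow_neg hσ.le]
  rw [hrpow2]
  have hfin : ∑ m ∈ Finset.range (k + 1),
      poch (-(k : ℝ)) m * poch (-(j : ℝ)) m / (poch (a+1) m * (m.factorial : ℝ)) *
        (((1:ℝ)/(1-s)) ^ 2) ^ m * (1 - 1/(1-s)) ^ (j + k - 2 * m)
      = (-s / (1 - s)) ^ (j + k) * hypF k (-(j : ℝ)) (a + 1) (1 / s ^ 2) := by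
    rw [hypF, Finset.mul_sum]
    refine Finset.sum_congr rfl fun m hm => ?_
    rw [Finset.mem_range] at hm
    by_cases hmj : m ≤ j
    · have h2m : 2 * m ≤ j + k := by omega
      have h1x : 1 - 1/(1-s) = -s/(1-s) := by
        field_simp
        ring
      rw [h1x, show j + k = (j + k - 2*m) + 2*m from by omega, pow_add]
      have hkey : (-s/(1-s))^(2*m) * (1/s^2)^m = (((1:ℝ)/(1-s))^2)^m := by
        rw [pow_mul, ← mul_pow]
        congr 1
        field_simp
      rw [show (j + k - 2*m) + 2*m - 2*m = j + k - 2*m from by omega]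
      rw [← hkey]
      ring
    · push_neg at hmj
      rw [poch_neg_nat_eq_zero hmj]
      ring
  rw [hfin]
  ring
end

section
/- Let ψ_n^{(L)}(x) = √(x^a e^{-x}) · n!(-1)^n L_n^{(a)}(x) for x > 0 and let K_N^{(L)}(x,y) = (ψ_N^{(L)}(x)ψ_{N-1}^{(L)}(y) - ψ_N^{(L)}(y)ψ_{N-1}^{(L)}(x)) / (h_{N-1}^{(L)} (x-y)) with h_n^{(L)} = Γ(n+1)Γ(n+a+1). Then (x ∂/∂x + y ∂/∂y)( (xy)^{1/2} K_N^{(L)}(x,y) ) = -((xy)^{1/2} / (2 h_{N-1}^{(L)})) (ψ_N^{(L)}(x) ψ_{N-1}^{(L)}(y) + ψ_{N-1}^{(L)}(x) ψ_N^{(L)}(y)). -/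
open Real

/-- Laguerre orthogonal function `ψ_n^{(L)}`. -/
noncomputable def psiL (a : ℝ) (n : ℕ) (x : ℝ) : ℝ :=
  Real.sqrt (x ^ a * Real.exp (-x)) * ((n.factorial : ℝ) * (-1) ^ n * lagL a n x)

/-- Laguerre norm `h_n^{(L)} = Γ(n+1)Γ(n+a+1)`. -/
noncomputable def hL (a : ℝ) (n : ℕ) : ℝ := Real.Gamma (n + 1) * Real.Gamma (n + a + 1)

/-- Christoffel–Darboux kernel for the Laguerre unitary ensemble. -/
noncomputable def KLag (a : ℝ) (N : ℕ) (x y : ℝ) : ℝ :=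
  (psiL a N x * psiL a (N - 1) y - psiL a N y * psiL a (N - 1) x) /
    (hL a (N - 1) * (x - y))

open Set Topology

noncomputable def uL (a : ℝ) (n : ℕ) : ℝ → ℝ := fun t => Real.exp (-t) * t ^ ((n : ℝ) + a)



lemma iteratedDerivWithin_of_isOpen' {f : ℝ → ℝ} {s : Set ℝ} (hs : IsOpen s) {x : ℝ}
    (hx : x ∈ s) (n : ℕ) : iteratedDerivWithin n f s x = iteratedDeriv n f x := by
  rw [iteratedDerivWithin_eq_iteratedFDerivWithin, iteratedDeriv_eq_iteratedFDeriv,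
    iteratedFDerivWithin_of_isOpen n hs hx]

lemma hasDerivAt_iteratedDeriv {f : ℝ → ℝ} {s : Set ℝ} (hs : IsOpen s)
    (hf : ContDiffOn ℝ (⊤ : ℕ∞) f s) {x : ℝ} (hx : x ∈ s) (n : ℕ) :
    HasDerivAt (iteratedDeriv n f) (iteratedDeriv (n + 1) f x) x := by
  have hu : UniqueDiffOn ℝ s := hs.uniqueDiffOn
  have h1 : DifferentiableOn ℝ (iteratedDerivWithin n f s) s :=
    hf.differentiableOn_iteratedDerivWithin (by exact_mod_cast lt_top_iff_ne_top.2 (by simp)) hu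
  have h2 : DifferentiableAt ℝ (iteratedDerivWithin n f s) x :=
    (h1 x hx).differentiableAt (hs.mem_nhds hx)
  have heq : iteratedDerivWithin n f s =ᶠ[𝓝 x] iteratedDeriv n f := by
    filter_upwards [hs.mem_nhds hx] with t ht using iteratedDerivWithin_of_isOpen' hs ht n
  have h3 : DifferentiableAt ℝ (iteratedDeriv n f) x := by
    exact (Filter.EventuallyEq.differentiableAt_iff heq).1 h2
  rw [iteratedDeriv_succ]
  exact h3.hasDerivAt

lemma iteratedDeriv_id_mul {f : ℝ → ℝ} {s : Set ℝ} (hs : IsOpen s)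
    (hf : ContDiffOn ℝ (⊤ : ℕ∞) f s) (n : ℕ) :
    ∀ x ∈ s, iteratedDeriv (n + 1) (fun t => t * f t) x
      = x * iteratedDeriv (n + 1) f x + ((n : ℝ) + 1) * iteratedDeriv n f x := by
  induction n with
  | zero =>
    intro x hx
    have hfx : HasDerivAt f (iteratedDeriv 1 f x) x := by
      simpa [iteratedDeriv_zero] using hasDerivAt_iteratedDeriv hs hf hx 0
    have hmul : HasDerivAt (fun t => t * f t) (1 * f x + x * iteratedDeriv 1 f x) x :=
      (hasDerivAt_id x).mul hfx
    rw [iteratedDeriv_one, hmul.deriv]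
    simp [iteratedDeriv_zero, iteratedDeriv_one]
    ring
  | succ n ih =>
    intro x hx
    have h1 := hasDerivAt_iteratedDeriv hs hf hx (n + 1)
    have h2 := hasDerivAt_iteratedDeriv hs hf hx n
    have hD : HasDerivAt
        (fun t => t * iteratedDeriv (n + 1) f t + ((n : ℝ) + 1) * iteratedDeriv n f t)
        ((1 * iteratedDeriv (n + 1) f x + x * iteratedDeriv (n + 2) f x)
          + ((n : ℝ) + 1) * iteratedDeriv (n + 1) f x) x :=
      ((hasDerivAt_id x).mul h1).add (h2.const_mul _)
    have heq : iteratedDeriv (n + 1) (fun t => t * f t)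
        =ᶠ[𝓝 x] (fun t => t * iteratedDeriv (n + 1) f t + ((n : ℝ) + 1) * iteratedDeriv n f t) := by
      filter_upwards [hs.mem_nhds hx] with t ht using ih t ht
    rw [iteratedDeriv_succ, heq.deriv_eq, hD.deriv]
    push_cast
    ring



lemma uL_contDiffOn (a : ℝ) (n : ℕ) : ContDiffOn ℝ (⊤ : ℕ∞) (uL a n) (Set.Ioi 0) := by
  intro t ht
  exact ((Real.contDiff_exp.comp contDiff_neg).contDiffAt.mul
    (Real.contDiffAt_rpow_const_of_ne (ne_of_gt ht))).contDiffWithinAt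

lemma uL_hasDerivAt (a : ℝ) (n : ℕ) {t : ℝ} (ht : 0 < t) :
    HasDerivAt (uL a (n + 1)) ((((n : ℝ) + 1) + a) * uL a n t - uL a (n + 1) t) t := by
  have h1 : HasDerivAt (fun t : ℝ => Real.exp (-t)) (-Real.exp (-t)) t := by
    simpa using (hasDerivAt_neg t).exp
  have h2 : HasDerivAt (fun t : ℝ => t ^ (((n + 1 : ℕ) : ℝ) + a))
      ((((n + 1 : ℕ) : ℝ) + a) * t ^ ((((n + 1 : ℕ) : ℝ) + a) - 1)) t :=
    Real.hasDerivAt_rpow_const (Or.inl (ne_of_gt ht))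
  have h3 := h1.mul h2
  have he : (((n + 1 : ℕ) : ℝ) + a) - 1 = (n : ℝ) + a := by push_cast; ring
  rw [he] at h3
  convert h3 using 1
  · rfl
  · rfl
  · rfl
  unfold uL
  push_cast
  ring



lemma D_rec (a : ℝ) (n : ℕ) {x : ℝ} (hx : 0 < x) :
    iteratedDeriv (n + 1) (uL a (n + 1)) x
      = x * iteratedDeriv (n + 1) (uL a n) x + ((n : ℝ) + 1) * iteratedDeriv n (uL a n) x := by
  have hEq : Set.EqOn (uL a (n + 1)) (fun t => t * uL a n t) (Set.Ioi 0) := by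
    intro t ht
    show Real.exp (-t) * t ^ (((n + 1 : ℕ) : ℝ) + a) = t * (Real.exp (-t) * t ^ ((n : ℝ) + a))
    rw [show (((n + 1 : ℕ)) : ℝ) + a = ((n : ℝ) + a) + 1 by push_cast; ring,
      Real.rpow_add_one (ne_of_gt ht)]
    ring
  rw [hEq.iteratedDeriv_of_isOpen isOpen_Ioi (n + 1) hx]
  exact iteratedDeriv_id_mul isOpen_Ioi (uL_contDiffOn a n) n x hx

lemma D_deriv_rec (a : ℝ) (n : ℕ) {x : ℝ} (hx : 0 < x) :
    iteratedDeriv (n + 2) (uL a (n + 1)) x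
      = (((n : ℝ) + 1) + a) * iteratedDeriv (n + 1) (uL a n) x
        - iteratedDeriv (n + 1) (uL a (n + 1)) x := by
  rw [show n + 2 = (n + 1) + 1 from rfl, iteratedDeriv_succ']
  have hEq : Set.EqOn (deriv (uL a (n + 1)))
      ((fun t => ((((n : ℝ) + 1) + a) * uL a n t) - uL a (n + 1) t)) (Set.Ioi 0) := by
    intro t ht
    exact (uL_hasDerivAt a n ht).deriv
  rw [hEq.iteratedDeriv_of_isOpen isOpen_Ioi (n + 1) hx]
  have hu : UniqueDiffOn ℝ (Set.Ioi (0:ℝ)) := isOpen_Ioi.uniqueDiffOn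
  have hx' : x ∈ Set.Ioi (0:ℝ) := Set.mem_Ioi.mpr hx
  have hc1 : ContDiffOn ℝ (n + 1 : ℕ) (fun t => (((n : ℝ) + 1) + a) * uL a n t) (Set.Ioi 0) :=
    ((uL_contDiffOn a n).of_le (mod_cast le_top)).const_smul ((n : ℝ) + 1 + a) |>.congr
      (fun t _ => by simp [smul_eq_mul])
  have hc2 : ContDiffOn ℝ (n + 1 : ℕ) (uL a (n + 1)) (Set.Ioi 0) :=
    (uL_contDiffOn a (n + 1)).of_le (mod_cast le_top)
  have hsub : iteratedDerivWithin (n + 1) ((fun t => (((n : ℝ) + 1) + a) * uL a n t) - uL a (n + 1))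
      (Set.Ioi 0) x = iteratedDerivWithin (n + 1) (fun t => (((n : ℝ) + 1) + a) * uL a n t)
        (Set.Ioi 0) x - iteratedDerivWithin (n + 1) (uL a (n + 1)) (Set.Ioi 0) x :=
    iteratedDerivWithin_sub hx' hu (hc1 x hx') (hc2 x hx')
  rw [← iteratedDerivWithin_of_isOpen' isOpen_Ioi hx' (n + 1)]
  have hfun : (fun t => (((n : ℝ) + 1) + a) * uL a n t - uL a (n + 1) t)
      = (fun t => (((n : ℝ) + 1) + a) * uL a n t) - uL a (n + 1) := rfl
  have hcm : iteratedDerivWithin (n + 1) (fun t => (((n : ℝ) + 1) + a) * uL a n t) (Set.Ioi 0) x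
      = (((n : ℝ) + 1) + a) * iteratedDerivWithin (n + 1) (uL a n) (Set.Ioi 0) x :=
    iteratedDerivWithin_const_mul hx' hu _ (((uL_contDiffOn a n).of_le (mod_cast le_top)) x hx')
  rw [hfun, hsub, hcm,
    iteratedDerivWithin_of_isOpen' isOpen_Ioi hx' (n + 1),
    iteratedDerivWithin_of_isOpen' isOpen_Ioi hx' (n + 1)]



lemma psiL_eq (a : ℝ) (n : ℕ) {t : ℝ} (ht : 0 < t) :
    psiL a n t = (-1) ^ n * (t ^ (-(a/2)) * Real.exp (t/2)) * iteratedDeriv n (uL a n) t := by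
  have hfac : (n.factorial : ℝ) ≠ 0 := Nat.cast_ne_zero.mpr n.factorial_ne_zero
  have h1 : Real.sqrt (t ^ a * Real.exp (-t)) = t ^ (a/2) * Real.exp (-(t/2)) := by
    rw [Real.sqrt_eq_rpow, Real.mul_rpow (Real.rpow_nonneg ht.le a) (Real.exp_nonneg _),
      ← Real.rpow_mul ht.le, Real.rpow_def_of_pos (Real.exp_pos _), Real.log_exp]
    norm_num
    ring_nf
  have h2 : t ^ (a/2) * t ^ (-a) = t ^ (-(a/2)) := by
    rw [← Real.rpow_add ht]; congr 1; ring
  have h3 : Real.exp (-(t/2)) * Real.exp t = Real.exp (t/2) := by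
    rw [← Real.exp_add]; congr 1; ring
  show Real.sqrt (t ^ a * Real.exp (-t)) *
      ((n.factorial : ℝ) * (-1) ^ n * (t ^ (-a) * Real.exp t / (n.factorial : ℝ) *
        iteratedDeriv n (uL a n) t)) = _
  rw [h1]
  have hmid : t ^ (a/2) * Real.exp (-(t/2)) *
      ((n.factorial : ℝ) * (-1) ^ n * (t ^ (-a) * Real.exp t / (n.factorial : ℝ) *
        iteratedDeriv n (uL a n) t))
      = (-1) ^ n * ((t ^ (a/2) * t ^ (-a)) * (Real.exp (-(t/2)) * Real.exp t)) *
        iteratedDeriv n (uL a n) t := by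
    field_simp
  rw [hmid, h2, h3]



section
variable (a : ℝ) (m : ℕ) {x : ℝ}

lemma v_hasDerivAt (hx : 0 < x) :
    HasDerivAt (fun t : ℝ => t ^ (-(a/2)) * Real.exp (t/2))
      ((-(a/2) * x ^ (-(a/2) - 1)) * Real.exp (x/2)
        + x ^ (-(a/2)) * (Real.exp (x/2) * (1/2))) x := by
  have hva : HasDerivAt (fun t : ℝ => t ^ (-(a/2))) (-(a/2) * x ^ (-(a/2) - 1)) x :=
    Real.hasDerivAt_rpow_const (Or.inl hx.ne')
  have hhalf : HasDerivAt (fun t : ℝ => t / 2) ((1:ℝ)/2) x := by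
    simpa using (hasDerivAt_id x).div_const 2
  have hvb : HasDerivAt (fun t : ℝ => Real.exp (t/2)) (Real.exp (x/2) * (1/2)) x := hhalf.exp
  exact hva.mul hvb

lemma psiL_hasDerivAt_top (hx : 0 < x) :
    HasDerivAt (psiL a (m + 1))
      (((((m : ℝ) + 1) + a/2 - x/2) * psiL a (m + 1) x
        + ((m : ℝ) + 1) * (((m : ℝ) + 1) + a) * psiL a m x) / x) x := by
  have hx' : x ∈ Set.Ioi (0:ℝ) := Set.mem_Ioi.mpr hx
  have hD := hasDerivAt_iteratedDeriv isOpen_Ioi (uL_contDiffOn a (m + 1)) hx' (m + 1)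
  have hprod := ((v_hasDerivAt a hx).mul hD).const_mul ((-1:ℝ) ^ (m + 1))
  have heq : psiL a (m + 1) =ᶠ[𝓝 x] fun t =>
      (-1:ℝ) ^ (m + 1) * ((t ^ (-(a/2)) * Real.exp (t/2))
        * iteratedDeriv (m + 1) (uL a (m + 1)) t) := by
    filter_upwards [isOpen_Ioi.mem_nhds hx'] with t ht
    rw [psiL_eq a (m + 1) ht]; ring
  have hF := hprod.congr_of_eventuallyEq heq
  convert hF using 1
  · rfl
  · rfl
  rw [psiL_eq a (m + 1) hx, psiL_eq a m hx, D_deriv_rec a m hx]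
  have hR : iteratedDeriv (m + 1) (uL a m) x
      = (iteratedDeriv (m + 1) (uL a (m + 1)) x - ((m : ℝ) + 1) * iteratedDeriv m (uL a m) x)
        / x := by
    rw [eq_div_iff hx.ne']; linear_combination (-1 : ℝ) * D_rec a m hx
  have hpow : x ^ (-(a/2) - 1) = x ^ (-(a/2)) / x := by
    rw [eq_div_iff hx.ne', ← Real.rpow_add_one hx.ne']; norm_num
  rw [hR, hpow]
  field_simp
  ring

lemma psiL_hasDerivAt_bot (hx : 0 < x) :
    HasDerivAt (psiL a m)
      (((x/2 - ((m : ℝ) + 1) - a/2) * psiL a m x - psiL a (m + 1) x) / x) x := by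
  have hx' : x ∈ Set.Ioi (0:ℝ) := Set.mem_Ioi.mpr hx
  have hD := hasDerivAt_iteratedDeriv isOpen_Ioi (uL_contDiffOn a m) hx' m
  have hprod := ((v_hasDerivAt a hx).mul hD).const_mul ((-1:ℝ) ^ m)
  have heq : psiL a m =ᶠ[𝓝 x] fun t =>
      (-1:ℝ) ^ m * ((t ^ (-(a/2)) * Real.exp (t/2)) * iteratedDeriv m (uL a m) t) := by
    filter_upwards [isOpen_Ioi.mem_nhds hx'] with t ht
    rw [psiL_eq a m ht]; ring
  have hF := hprod.congr_of_eventuallyEq heq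
  convert hF using 1
  · rfl
  · rfl
  rw [psiL_eq a (m + 1) hx, psiL_eq a m hx]
  have hR : iteratedDeriv (m + 1) (uL a m) x
      = (iteratedDeriv (m + 1) (uL a (m + 1)) x - ((m : ℝ) + 1) * iteratedDeriv m (uL a m) x)
        / x := by
    rw [eq_div_iff hx.ne']; linear_combination (-1 : ℝ) * D_rec a m hx
  have hpow : x ^ (-(a/2) - 1) = x ^ (-(a/2)) / x := by
    rw [eq_div_iff hx.ne', ← Real.rpow_add_one hx.ne']; norm_num
  rw [hR, hpow]
  field_simp
  ring
end



theorem laguerre_kernel_derivative_identity (a : ℝ) (ha : -1 < a) (N : ℕ) (hN : 1 ≤ N)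
    (x y : ℝ) (hx : 0 < x) (hy : 0 < y) (hxy : x ≠ y) :
    x * deriv (fun x' => Real.sqrt (x' * y) * KLag a N x' y) x +
      y * deriv (fun y' => Real.sqrt (x * y') * KLag a N x y') y =
      -(Real.sqrt (x * y) / (2 * hL a (N - 1))) *
        (psiL a N x * psiL a (N - 1) y + psiL a (N - 1) x * psiL a N y) := by
  obtain ⟨m, rfl⟩ : ∃ m, N = m + 1 := ⟨N - 1, (Nat.succ_pred_eq_of_pos hN).symm⟩
  have hm1 : m + 1 - 1 = m := rfl
  have hmc : (0:ℝ) ≤ (m:ℝ) := Nat.cast_nonneg m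
  have hh : (0:ℝ) < hL a m := by
    have h1 : (0:ℝ) < (m:ℝ) + 1 := by linarith
    have h2 : (0:ℝ) < (m:ℝ) + a + 1 := by linarith
    exact mul_pos (Real.Gamma_pos_of_pos h1) (Real.Gamma_pos_of_pos h2)
  have hh' : hL a m ≠ 0 := hh.ne'
  have hxy' : x - y ≠ 0 := sub_ne_zero.mpr hxy
  have hden : hL a m * (x - y) ≠ 0 := mul_ne_zero hh' hxy'
  have hfx := psiL_hasDerivAt_top a m hx
  have hgx := psiL_hasDerivAt_bot a m hx
  have hfy := psiL_hasDerivAt_top a m hy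
  have hgy := psiL_hasDerivAt_bot a m hy
  have hsx : HasDerivAt (fun x' => Real.sqrt (x' * y)) (1 * y / (2 * Real.sqrt (x * y))) x := by
    have h := ((hasDerivAt_id x).mul_const y).sqrt (by positivity)
    simpa using h
  have hsy : HasDerivAt (fun y' => Real.sqrt (x * y')) (x * 1 / (2 * Real.sqrt (x * y))) y := by
    have h := ((hasDerivAt_id y).const_mul x).sqrt (by positivity)
    simpa using h
  have hnumx : HasDerivAt
      (fun x' => psiL a (m + 1) x' * psiL a m y - psiL a (m + 1) y * psiL a m x')
      (((((m : ℝ) + 1) + a/2 - x/2) * psiL a (m + 1) x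
          + ((m : ℝ) + 1) * (((m : ℝ) + 1) + a) * psiL a m x) / x * psiL a m y
        - psiL a (m + 1) y * (((x/2 - ((m : ℝ) + 1) - a/2) * psiL a m x
          - psiL a (m + 1) x) / x)) x :=
    (hfx.mul_const _).sub (hgx.const_mul _)
  have hdenx : HasDerivAt (fun x' => hL a m * (x' - y)) (hL a m * 1) x :=
    ((hasDerivAt_id x).sub_const y).const_mul (hL a m)
  have hKx := hnumx.div hdenx hden
  have hnumy : HasDerivAt
      (fun y' => psiL a (m + 1) x * psiL a m y' - psiL a (m + 1) y' * psiL a m x)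
      (psiL a (m + 1) x * (((y/2 - ((m : ℝ) + 1) - a/2) * psiL a m y
          - psiL a (m + 1) y) / y)
        - ((((m : ℝ) + 1) + a/2 - y/2) * psiL a (m + 1) y
          + ((m : ℝ) + 1) * (((m : ℝ) + 1) + a) * psiL a m y) / y * psiL a m x) y :=
    (hgy.const_mul _).sub (hfy.mul_const _)
  have hdeny : HasDerivAt (fun y' => hL a m * (x - y')) (hL a m * -1) y :=
    ((hasDerivAt_id y).const_sub x).const_mul (hL a m)
  have hKy := hnumy.div hdeny hden
  have hFx : HasDerivAt (fun x' => Real.sqrt (x' * y) * KLag a (m + 1) x' y) _ x := hsx.mul hKx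
  have hFy : HasDerivAt (fun y' => Real.sqrt (x * y') * KLag a (m + 1) x y') _ y := hsy.mul hKy
  rw [hFx.deriv, hFy.deriv]
  show x * (1 * y / (2 * Real.sqrt (x * y)) *
        ((psiL a (m + 1) x * psiL a m y - psiL a (m + 1) y * psiL a m x) / (hL a m * (x - y)))
      + Real.sqrt (x * y) * _)
    + y * (x * 1 / (2 * Real.sqrt (x * y)) *
        ((psiL a (m + 1) x * psiL a m y - psiL a (m + 1) y * psiL a m x) / (hL a m * (x - y)))
      + Real.sqrt (x * y) * _) = _
  rw [Real.sqrt_mul hx.le y]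
  simp only [hm1]
  set u := Real.sqrt x with hu
  set v := Real.sqrt y with hv
  have hu2 : u ^ 2 = x := Real.sq_sqrt hx.le
  have hv2 : v ^ 2 = y := Real.sq_sqrt hy.le
  have hun : u ≠ 0 := by rw [hu]; positivity
  have hvn : v ≠ 0 := by rw [hv]; positivity
  rw [← hu2, ← hv2] at hxy' hden ⊢
  field_simp
  ring
end

section
/- With K_N^{(L)}(t,t) the diagonal Christoffel–Darboux kernel for the Laguerre weight t^a e^{-t} (the LUE eigenvalue density for N eigenvalues), one has (d/dt)(t K_N^{(L)}(t,t)) = -(1/h_{N-1}^{(L)}) ψ_N^{(L)}(t) ψ_{N-1}^{(L)}(t), where ψ_n^{(L)}(t) = √(t^a e^{-t}) p_n^{(L)}(t) and h_n^{(L)} = Γ(n+1)Γ(n+a+1). -/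
open Real Finset

/-- Diagonal Christoffel–Darboux kernel (eigenvalue density) for the LUE. -/
noncomputable def KLagDiag (a : ℝ) (N : ℕ) (t : ℝ) : ℝ :=
  ∑ j ∈ Finset.range N, psiL a j t ^ 2 / hL a j

namespace LagAux

noncomputable def P (c : ℝ) (j : ℕ) : ℝ := ∏ i ∈ Finset.range j, (c - i)

@[simp] lemma P_zero (c : ℝ) : P c 0 = 1 := by simp [P]

lemma P_succ (c : ℝ) (j : ℕ) : P c (j+1) = P c j * (c - j) := Finset.prod_range_succ _ _

lemma P_succ' (c : ℝ) (j : ℕ) : P c (j+1) = c * P (c-1) j := by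
  rw [P, Finset.prod_range_succ']
  simp only [Nat.cast_zero, sub_zero, mul_comm]
  congr 1
  apply Finset.prod_congr rfl
  intro i _
  push_cast
  ring

noncomputable def B (c : ℝ) (k j : ℕ) : ℝ := (k.choose j : ℝ) * (-1)^(k-j) * P c j

noncomputable def G (c : ℝ) (k : ℕ) (x : ℝ) : ℝ :=
  ∑ j ∈ Finset.range (k+1), B c k j * (x ^ (c - (j:ℝ)) * Real.exp (-x))

lemma B_id1 (c : ℝ) (k j : ℕ) (hj : j ≤ k) :
    B c (k+1) (j+1) = B c k j * (c - j) - B c k (j+1) := by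
  rcases eq_or_lt_of_le hj with rfl | h
  · simp [B, Nat.choose_succ_self, Nat.choose_self, P_succ]
  · have h1 : k + 1 - (j+1) = k - j := by omega
    have h2 : k - j = (k - (j+1)) + 1 := by omega
    rw [B, B, B, h1, P_succ, h2, Nat.choose_succ_succ]
    push_cast
    ring

lemma hasDerivAt_term (p : ℝ) {x : ℝ} (hx : 0 < x) :
    HasDerivAt (fun y : ℝ => y ^ p * Real.exp (-y))
      ((p * x ^ (p-1) - x ^ p) * Real.exp (-x)) x := by
  have h1 : HasDerivAt (fun y : ℝ => y ^ p) (p * x ^ (p-1)) x :=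
    Real.hasDerivAt_rpow_const (Or.inl hx.ne')
  have h2 : HasDerivAt (fun y : ℝ => Real.exp (-y)) (-Real.exp (-x)) x := by
    simpa [Function.comp_def] using (Real.hasDerivAt_exp (-x)).comp x (hasDerivAt_neg x)
  exact (h1.fun_mul h2).congr_deriv (by ring)

lemma hasDerivAt_G (c : ℝ) (k : ℕ) {x : ℝ} (hx : 0 < x) :
    HasDerivAt (G c k) (G c (k+1) x) x := by
  have H : HasDerivAt (G c k)
      (∑ j ∈ Finset.range (k+1),
        B c k j * (((c - j) * x ^ (c - (j:ℝ) - 1) - x ^ (c - (j:ℝ))) * Real.exp (-x))) x := by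
    apply HasDerivAt.fun_sum
    intro j _
    exact (hasDerivAt_term (c - (j:ℝ)) hx).const_mul (B c k j)
  convert H using 1
  have expand : ∀ j ∈ Finset.range (k+1),
      B c k j * (((c - j) * x ^ (c - (j:ℝ) - 1) - x ^ (c - (j:ℝ))) * Real.exp (-x))
      = B c k j * (c - j) * (x ^ (c - ((j:ℝ)+1)) * Real.exp (-x))
        - B c k j * (x ^ (c - (j:ℝ)) * Real.exp (-x)) := by
    intro j _
    have : c - (j:ℝ) - 1 = c - ((j:ℝ)+1) := by ring
    rw [this]; ring
  rw [Finset.sum_congr rfl expand, Finset.sum_sub_distrib]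
  rw [Finset.sum_range_succ' (fun j => B c k j * (x ^ (c - (j:ℝ)) * Real.exp (-x))) k]
  rw [G, Finset.sum_range_succ' (fun j => B c (k+1) j * (x ^ (c - (j:ℝ)) * Real.exp (-x))) (k+1)]
  have hB0 : B c (k+1) 0 = - B c k 0 := by simp [B, pow_succ]
  have hext : ∑ j ∈ Finset.range k, B c k (j+1) * (x ^ (c - ((j:ℝ)+1)) * Real.exp (-x))
      = ∑ j ∈ Finset.range (k+1), B c k (j+1) * (x ^ (c - ((j:ℝ)+1)) * Real.exp (-x)) := by
    rw [Finset.sum_range_succ]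
    simp [B, Nat.choose_succ_self]
  have hcast : ∀ j : ℕ, ((j:ℝ)+1) = ((j+1 : ℕ) : ℝ) := by intro j; push_cast; ring
  simp only [hcast] at *
  rw [hext, hB0]
  have hsum : ∑ j ∈ Finset.range (k+1), B c (k+1) (j+1) * (x ^ (c - ((j+1:ℕ):ℝ)) * Real.exp (-x))
      = ∑ j ∈ Finset.range (k+1), B c k j * (c - j) * (x ^ (c - ((j+1:ℕ):ℝ)) * Real.exp (-x))
        - ∑ j ∈ Finset.range (k+1), B c k (j+1) * (x ^ (c - ((j+1:ℕ):ℝ)) * Real.exp (-x)) := by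
    rw [← Finset.sum_sub_distrib]
    refine Finset.sum_congr rfl (fun j hj => ?_)
    rw [B_id1 c k j (by simp at hj; omega)]
    ring
  rw [hsum]
  ring

lemma iteratedDeriv_eq (c : ℝ) (k : ℕ) {x : ℝ} (hx : 0 < x) :
    iteratedDeriv k (fun t : ℝ => Real.exp (-t) * t ^ c) x = G c k x := by
  induction k generalizing x with
  | zero => simp [G, B, P, mul_comm]
  | succ k ih =>
    rw [iteratedDeriv_succ]
    have hev : iteratedDeriv k (fun t : ℝ => Real.exp (-t) * t ^ c) =ᶠ[nhds x] G c k := by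
      filter_upwards [isOpen_Ioi.mem_nhds hx] with y hy
      exact ih hy
    rw [hev.deriv_eq, (hasDerivAt_G c k hx).deriv]

noncomputable def cf (a : ℝ) (n j : ℕ) : ℝ := (n.choose j : ℝ) * (-1)^j * P ((n:ℝ)+a) j

noncomputable def q (a : ℝ) (n : ℕ) (x : ℝ) : ℝ :=
  ∑ j ∈ Finset.range (n+1), cf a n j * x^(n-j)

noncomputable def dq (a : ℝ) (n : ℕ) (x : ℝ) : ℝ :=
  ∑ j ∈ Finset.range (n+1), cf a n j * (((n-j : ℕ) : ℝ) * x^(n-j-1))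

@[simp] lemma cf_zero (a : ℝ) (n : ℕ) : cf a n 0 = 1 := by simp [cf]

lemma neg_one_pow_sub {n j : ℕ} (hjn : j ≤ n) : ((-1:ℝ))^(n-j) = (-1)^n * (-1)^j := by
  have h1 : ((-1:ℝ))^n = (-1)^(n-j) * (-1)^j := by
    rw [← pow_add]; congr 1; omega
  have h2 : ((-1:ℝ))^(j+j) = 1 := by
    rw [show j + j = 2*j from by omega, pow_mul]; norm_num
  rw [h1, mul_assoc, ← pow_add, h2, mul_one]

lemma G_eq_q (a : ℝ) (n : ℕ) {x : ℝ} (hx : 0 < x) :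
    G ((n:ℝ)+a) n x = (-1)^n * (x ^ a * Real.exp (-x)) * q a n x := by
  rw [G, q, Finset.mul_sum]
  refine Finset.sum_congr rfl (fun j hj => ?_)
  have hjn : j ≤ n := by simp at hj; omega
  have hpow : x ^ ((n:ℝ) + a - (j:ℝ)) = x ^ a * x ^ ((n - j : ℕ) : ℝ) := by
    rw [← Real.rpow_add hx]
    congr 1
    rw [Nat.cast_sub hjn]
    ring
  rw [B, hpow, Real.rpow_natCast, cf, neg_one_pow_sub hjn]
  ring

lemma lag_eq_q (a : ℝ) (n : ℕ) {x : ℝ} (hx : 0 < x) :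
    (n.factorial : ℝ) * (-1)^n * lagL a n x = q a n x := by
  rw [lagL, iteratedDeriv_eq _ _ hx, G_eq_q a n hx]
  have hfac : (n.factorial : ℝ) ≠ 0 := by exact_mod_cast n.factorial_ne_zero
  have h1 : x ^ (-a) * x ^ a = 1 := by
    rw [← Real.rpow_add hx]; simp
  have h2 : Real.exp x * Real.exp (-x) = 1 := by
    rw [← Real.exp_add]; simp
  have h3 : ((-1:ℝ))^n * (-1)^n = 1 := by
    rw [← pow_add, show n + n = 2*n from by omega, pow_mul]; norm_num
  calc (n.factorial:ℝ) * (-1)^n * (x ^ (-a) * Real.exp x / (n.factorial:ℝ) *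
        ((-1)^n * (x^a * Real.exp (-x)) * q a n x))
      = ((n.factorial:ℝ)/(n.factorial:ℝ)) * ((-1:ℝ)^n*(-1:ℝ)^n) * (x^(-a)*x^a) *
          (Real.exp x * Real.exp (-x)) * q a n x := by ring
    _ = q a n x := by rw [div_self hfac, h1, h2, h3]; ring

lemma hasDerivAt_q (a : ℝ) (n : ℕ) (x : ℝ) : HasDerivAt (q a n) (dq a n x) x := by
  apply HasDerivAt.fun_sum
  intro j _
  exact (hasDerivAt_pow (n-j) x).const_mul (cf a n j)

lemma cf_key (a : ℝ) (m i : ℕ) (hi : i ≤ m) :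
    cf a (m+1) (i+1) * (((m+1) - (i+1) : ℕ) : ℝ)
      = ((m:ℝ)+1) * cf a (m+1) (i+1) + ((m:ℝ)+1)*(((m:ℝ)+1)+a) * cf a m i := by
  have key : ((m:ℝ)+1) * (m.choose i : ℝ) = ((m+1).choose (i+1) : ℝ) * ((i:ℝ)+1) := by
    exact_mod_cast Nat.add_one_mul_choose_eq m i
  have hc : (((m+1) - (i+1) : ℕ) : ℝ) = ((m:ℝ)) - ((i:ℝ)) := by
    rw [Nat.succ_sub_succ]
    exact Nat.cast_sub hi
  have hP : P ((((m+1:ℕ)):ℝ) + a) (i+1) = (((m:ℝ)+1)+a) * P ((m:ℝ)+a) i := by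
    rw [P_succ', show ((((m+1:ℕ)):ℝ) + a) - 1 = (m:ℝ)+a from by push_cast; ring]
    push_cast
    ring
  rw [cf, cf, hP, hc]
  push_cast
  linear_combination ((-1:ℝ)^(i+1) * (((m:ℝ)+1)+a) * P ((m:ℝ)+a) i) * key

lemma qI (a : ℝ) (n : ℕ) (x : ℝ) :
    x * dq a n x = n * q a n x + n*((n:ℝ)+a) * q a (n-1) x := by
  rcases n with _ | m
  · simp [dq, q]
  have hstep1 : x * dq a (m+1) x
      = ∑ j ∈ Finset.range (m+2), cf a (m+1) j * ((((m+1)-j : ℕ)):ℝ) * x^((m+1)-j) := by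
    rw [dq, Finset.mul_sum]
    refine Finset.sum_congr rfl (fun j hj => ?_)
    rcases eq_or_lt_of_le (by simp at hj; omega : j ≤ m+1) with rfl | h
    · simp
    · obtain ⟨k, hk⟩ : ∃ k, (m+1) - j = k+1 := ⟨m-j, by omega⟩
      simp only [hk, Nat.add_sub_cancel, pow_succ]
      ring
  rw [hstep1, Finset.sum_range_succ'
    (fun j => cf a (m+1) j * ((((m+1)-j : ℕ)):ℝ) * x^((m+1)-j)) (m+1)]
  have hpt : ∀ i ∈ Finset.range (m+1),
      cf a (m+1) (i+1) * ((((m+1)-(i+1) : ℕ)):ℝ) * x^((m+1)-(i+1))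
      = ((m:ℝ)+1) * (cf a (m+1) (i+1) * x^((m+1)-(i+1)))
        + ((m:ℝ)+1)*(((m:ℝ)+1)+a) * (cf a m i * x^(m-i)) := by
    intro i hi
    have hi' : i ≤ m := by simp at hi; omega
    have hpow : (m+1)-(i+1) = m - i := by omega
    rw [cf_key a m i hi', hpow]
    ring
  rw [Finset.sum_congr rfl hpt, Finset.sum_add_distrib, ← Finset.mul_sum, ← Finset.mul_sum]
  have hq1 : q a (m+1) x = (∑ i ∈ Finset.range (m+1), cf a (m+1) (i+1) * x^((m+1)-(i+1)))
      + cf a (m+1) 0 * x^((m+1)-0) := by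
    rw [q, Finset.sum_range_succ' (fun j => cf a (m+1) j * x^((m+1)-j)) (m+1)]
  have hq2 : q a ((m+1)-1) x = ∑ i ∈ Finset.range (m+1), cf a m i * x^(m-i) := by
    rw [show (m+1)-1 = m from rfl, q]
  rw [hq1, hq2]
  push_cast
  ring

lemma B_id2 (c : ℝ) (k j : ℕ) (hj : j ≤ k) :
    B (c+1) (k+1) (j+1) = B c (k+1) (j+1) + ((k:ℝ)+1) * B c k j := by
  have key : ((k:ℝ)+1) * (k.choose j : ℝ) = ((k+1).choose (j+1) : ℝ) * ((j:ℝ)+1) := by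
    exact_mod_cast Nat.add_one_mul_choose_eq k j
  have hs : k + 1 - (j+1) = k - j := by omega
  rw [B, B, B, hs, P_succ' (c+1) j, show c+1-1 = c from by ring, P_succ]
  linear_combination (-((-1:ℝ)^(k-j)) * P c j) * key

lemma G_mul (c : ℝ) (k : ℕ) {x : ℝ} (hx : 0 < x) :
    G (c+1) (k+1) x = x * G c (k+1) x + ((k:ℝ)+1) * G c k x := by
  have h1 : x * G c (k+1) x
      = ∑ j ∈ Finset.range (k+2), B c (k+1) j * (x ^ (c+1-(j:ℝ)) * Real.exp (-x)) := by
    rw [G, Finset.mul_sum]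
    refine Finset.sum_congr rfl (fun j _ => ?_)
    rw [show c+1-(j:ℝ) = (c-(j:ℝ))+1 from by ring, Real.rpow_add_one hx.ne']
    ring
  have h2 : ((k:ℝ)+1) * G c k x
      = ∑ j ∈ Finset.range (k+1),
          ((k:ℝ)+1) * B c k j * (x ^ (c+1-((j+1:ℕ):ℝ)) * Real.exp (-x)) := by
    rw [G, Finset.mul_sum]
    refine Finset.sum_congr rfl (fun j _ => ?_)
    rw [show c+1-((j+1:ℕ):ℝ) = c - (j:ℝ) from by push_cast; ring]
    ring
  rw [h1, h2, G]
  rw [Finset.sum_range_succ' (fun j => B (c+1) (k+1) j * (x ^ (c+1-(j:ℝ)) * Real.exp (-x))) (k+1),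
      Finset.sum_range_succ' (fun j => B c (k+1) j * (x ^ (c+1-(j:ℝ)) * Real.exp (-x))) (k+1)]
  have hpt : ∀ j ∈ Finset.range (k+1),
      B (c+1) (k+1) (j+1) * (x ^ (c+1-((j+1:ℕ):ℝ)) * Real.exp (-x))
      = B c (k+1) (j+1) * (x ^ (c+1-((j+1:ℕ):ℝ)) * Real.exp (-x))
        + ((k:ℝ)+1) * B c k j * (x ^ (c+1-((j+1:ℕ):ℝ)) * Real.exp (-x)) := by
    intro j hj
    rw [B_id2 c k j (by simp at hj; omega)]
    ring
  rw [Finset.sum_congr rfl hpt, Finset.sum_add_distrib]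
  have hB0 : B (c+1) (k+1) 0 = B c (k+1) 0 := by simp [B]
  rw [hB0]
  push_cast
  ring

lemma hasDerivAt_W (a : ℝ) {x : ℝ} (hx : 0 < x) :
    HasDerivAt (fun y : ℝ => y ^ a * Real.exp (-y))
      ((a * x^(a-1) - x^a) * Real.exp (-x)) x := hasDerivAt_term a hx

lemma qII (a : ℝ) (n : ℕ) {x : ℝ} (hx : 0 < x) :
    x * q a n x = q a (n+1) x + (2*(n:ℝ)+a+1) * q a n x
      + (n:ℝ)*((n:ℝ)+a) * q a (n-1) x := by
  have hW : x ^ a * Real.exp (-x) ≠ 0 := by positivity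
  have hprod : HasDerivAt (fun y : ℝ => (-1:ℝ)^n * ((y^a * Real.exp (-y)) * q a n y))
      ((-1:ℝ)^n * (((a*x^(a-1) - x^a) * Real.exp (-x)) * q a n x
        + (x^a*Real.exp (-x)) * dq a n x)) x :=
    ((hasDerivAt_W a hx).mul (hasDerivAt_q a n x)).const_mul _
  have hGev : G ((n:ℝ)+a) n
      =ᶠ[nhds x] fun y => (-1:ℝ)^n * ((y^a * Real.exp (-y)) * q a n y) := by
    filter_upwards [isOpen_Ioi.mem_nhds hx] with y hy
    rw [G_eq_q a n hy]; ring
  have hGd : G ((n:ℝ)+a) (n+1) x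
      = (-1:ℝ)^n * (((a*x^(a-1)-x^a)*Real.exp (-x)) * q a n x
          + (x^a*Real.exp (-x)) * dq a n x) := by
    rw [← (hasDerivAt_G _ n hx).deriv, hGev.deriv_eq, hprod.deriv]
  have hmul := G_mul ((n:ℝ)+a) n hx
  have hL : G ((n:ℝ)+a+1) (n+1) x
      = (-1:ℝ)^(n+1) * (x^a*Real.exp (-x)) * q a (n+1) x := by
    rw [show (n:ℝ)+a+1 = ((n+1:ℕ):ℝ)+a from by push_cast; ring]
    exact G_eq_q a (n+1) hx
  rw [hL, hGd, G_eq_q a n hx] at hmul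
  have hxa : x * x^(a-1) = x^a := by
    rw [Real.rpow_sub hx, Real.rpow_one]
    field_simp
  have hq := qI a n x
  have main : ((-1:ℝ)^n * (x^a*Real.exp (-x))) * (x * q a n x)
      = ((-1:ℝ)^n * (x^a*Real.exp (-x)))
        * (q a (n+1) x + (2*(n:ℝ)+a+1) * q a n x + (n:ℝ)*((n:ℝ)+a) * q a (n-1) x) := by
    linear_combination hmul + ((-1:ℝ)^n * (x^a*Real.exp (-x))) * hq
      + ((-1:ℝ)^n * a * Real.exp (-x) * q a n x) * hxa
  exact mul_left_cancel₀ (mul_ne_zero (pow_ne_zero _ (by norm_num)) hW) main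

lemma psiL_q (a : ℝ) (n : ℕ) {x : ℝ} (hx : 0 < x) :
    psiL a n x = (x ^ (a/2) * Real.exp (-x/2)) * q a n x := by
  rw [psiL, lag_eq_q a n hx]
  congr 1
  rw [Real.sqrt_mul (Real.rpow_nonneg hx.le a)]
  congr 1
  · rw [Real.sqrt_eq_rpow, ← Real.rpow_mul hx.le]
    congr 1
    ring
  · rw [show -x/2 = -(x)/2 from by ring, Real.exp_half]

lemma hL_pos {a : ℝ} (ha : -1 < a) (n : ℕ) : 0 < hL a n := by
  have h1 : (0:ℝ) < (n:ℝ) + 1 := by positivity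
  have h2 : (0:ℝ) < (n:ℝ) + a + 1 := by
    have : (0:ℝ) ≤ (n:ℝ) := Nat.cast_nonneg n
    linarith
  exact mul_pos (Real.Gamma_pos_of_pos h1) (Real.Gamma_pos_of_pos h2)

lemma hL_succ {a : ℝ} (ha : -1 < a) (n : ℕ) :
    hL a (n+1) = ((n:ℝ)+1) * (((n:ℝ)+1)+a) * hL a n := by
  have hn : (0:ℝ) ≤ (n:ℝ) := Nat.cast_nonneg n
  have h1 : ((n:ℝ)+1) ≠ 0 := by positivity
  have h2 : ((n:ℝ)+a+1) ≠ 0 := by intro h; linarith [h]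
  rw [hL, hL, show (((n+1:ℕ)):ℝ) = (n:ℝ)+1 from by push_cast; ring]
  rw [show (n:ℝ)+1+1 = ((n:ℝ)+1)+1 from by ring, Real.Gamma_add_one h1]
  rw [show (n:ℝ)+1+a+1 = ((n:ℝ)+a+1)+1 from by ring, Real.Gamma_add_one h2]
  ring

end LagAux

open LagAux in
theorem laguerre_diagonal_kernel_derivative (a : ℝ) (ha : -1 < a) (N : ℕ)
    (hN : 1 ≤ N) (t : ℝ) (ht : 0 < t) :
    deriv (fun t' => t' * KLagDiag a N t') t =
      -(1 / hL a (N - 1)) * psiL a N t * psiL a (N - 1) t := by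
  set s : ℝ := t ^ (a/2) * Real.exp (-t/2) with hs
  set wd : ℝ := (a/2 * t^(a/2-1) - t^(a/2)/2) * Real.exp (-t/2) with hwd
  set T : ℕ → ℝ := fun j =>
    -(((j:ℝ)*((j:ℝ)+a))/hL a j) * (s^2 * (q a j t * q a (j-1) t)) with hT
  have hLne : ∀ j, hL a j ≠ 0 := fun j => (hL_pos ha j).ne'
  -- derivative of the weight-half function
  have hw2 : HasDerivAt (fun y : ℝ => y ^ (a/2) * Real.exp (-y/2)) wd t := by
    have h1 : HasDerivAt (fun y : ℝ => y ^ (a/2)) (a/2 * t ^ (a/2-1)) t :=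
      Real.hasDerivAt_rpow_const (Or.inl ht.ne')
    have h2 : HasDerivAt (fun y : ℝ => Real.exp (-y/2)) (Real.exp (-t/2) * (-1/2)) t :=
      by have := (Real.hasDerivAt_exp (-t/2)).comp t ((hasDerivAt_neg t).div_const 2); exact this
    have := h1.fun_mul h2
    rw [hwd]
    refine this.congr_deriv ?_
    ring
  have hxa2 : t * t ^ (a/2-1) = t ^ (a/2) := by
    rw [Real.rpow_sub ht, Real.rpow_one]
    field_simp
  have h1 : t * wd = s * (a - t) / 2 := by
    rw [hwd, hs]
    calc t * ((a/2 * t^(a/2-1) - t^(a/2)/2) * Real.exp (-t/2))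
        = (a/2 * (t * t^(a/2-1)) - t * t^(a/2)/2) * Real.exp (-t/2) := by ring
      _ = (a/2 * t^(a/2) - t * t^(a/2)/2) * Real.exp (-t/2) := by rw [hxa2]
      _ = t ^ (a/2) * Real.exp (-t/2) * (a - t) / 2 := by ring
  -- per-term derivative
  have hterm : ∀ j : ℕ, HasDerivAt
      (fun y : ℝ => y * ((y ^ (a/2) * Real.exp (-y/2)) * q a j y)^2 / hL a j)
      (T (j+1) - T j) t := by
    intro j
    have hpsi : HasDerivAt (fun y : ℝ => (y ^ (a/2) * Real.exp (-y/2)) * q a j y)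
        (wd * q a j t + s * dq a j t) t := hw2.mul (hasDerivAt_q a j t)
    have hprod := ((hasDerivAt_id t).fun_mul (hpsi.fun_pow 2)).div_const (hL a j)
    refine hprod.congr_deriv ?_
    have key : 1 * (s * q a j t)^2
        + t * (((2:ℕ):ℝ) * (s * q a j t)^(2-1) * (wd * q a j t + s * dq a j t))
        = s^2 * (-(q a j t * q a (j+1) t)
            + (j:ℝ)*((j:ℝ)+a) * (q a j t * q a (j-1) t)) := by
      push_cast
      linear_combination (2*s*(q a j t)^2) * h1 + (2*s^2*(q a j t)) * (qI a j t)
        + (-(s^2)*(q a j t)) * (qII a j ht)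
    have hTd : T (j+1) - T j
        = (s^2 * (-(q a j t * q a (j+1) t)
            + (j:ℝ)*((j:ℝ)+a) * (q a j t * q a (j-1) t))) / hL a j := by
      rw [hT]
      simp only [Nat.add_sub_cancel]
      rw [hL_succ ha j]
      have h3 : ((j:ℝ)+1) ≠ 0 := by positivity
      have h4 : ((j:ℝ)+1+a) ≠ 0 := by
        have : (0:ℝ) ≤ (j:ℝ) := Nat.cast_nonneg j
        intro h; linarith [h]
      have h6 : ((j:ℝ)+1) * (((j:ℝ)+1)+a) / (((j:ℝ)+1) * (((j:ℝ)+1)+a) * hL a j)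
          = 1 / hL a j := by
        rw [div_eq_div_iff (mul_ne_zero (mul_ne_zero h3 h4) (hLne j)) (hLne j)]
        ring
      push_cast
      rw [h6]
      ring
    rw [hTd, ← key]
    simp only [id_eq]
    rfl
  -- sum it up
  have hsum : HasDerivAt (fun y : ℝ => ∑ j ∈ Finset.range N,
      y * ((y ^ (a/2) * Real.exp (-y/2)) * q a j y)^2 / hL a j) (T N - T 0) t := by
    have := HasDerivAt.fun_sum (u := Finset.range N)
      (A := fun j y => y * ((y ^ (a/2) * Real.exp (-y/2)) * q a j y)^2 / hL a j)
      (A' := fun j => T (j+1) - T j) (fun j _ => hterm j)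
    rwa [Finset.sum_range_sub T N] at this
  have hev : (fun t' => t' * KLagDiag a N t')
      =ᶠ[nhds t] (fun y : ℝ => ∑ j ∈ Finset.range N,
        y * ((y ^ (a/2) * Real.exp (-y/2)) * q a j y)^2 / hL a j) := by
    filter_upwards [isOpen_Ioi.mem_nhds ht] with y hy
    rw [KLagDiag, Finset.mul_sum]
    refine Finset.sum_congr rfl (fun j _ => ?_)
    rw [psiL_q a j hy]
    ring
  rw [hev.deriv_eq, hsum.deriv]
  -- final identification
  have hT0 : T 0 = 0 := by simp [hT]
  obtain ⟨M, rfl⟩ : ∃ M, N = M + 1 := ⟨N - 1, by omega⟩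
  rw [hT0, sub_zero]
  simp only [hT, Nat.add_sub_cancel]
  rw [psiL_q a (M+1) ht, psiL_q a M ht, hL_succ ha M]
  have h3 : ((M:ℝ)+1) ≠ 0 := by positivity
  have h4 : ((M:ℝ)+1+a) ≠ 0 := by
    have : (0:ℝ) ≤ (M:ℝ) := Nat.cast_nonneg M
    intro h; linarith [h]
  have h6 : ((M:ℝ)+1) * (((M:ℝ)+1)+a) / (((M:ℝ)+1) * (((M:ℝ)+1)+a) * hL a M)
      = 1 / hL a M := by
    rw [div_eq_div_iff (mul_ne_zero (mul_ne_zero h3 h4) (hLne M)) (hLne M)]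
    ring
  push_cast
  rw [h6]
  ring
end
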